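/- arXiv:1910.05928 — 2 statements merged into one kernel-verified Lean document; each statement's English description precedes it below -/
import Mathlib

section
/- If I : ℤIrr(B) → ℤIrr(B') and J : ℤIrr(B') → ℤIrr(B'') are perfect isometries, then the composition J∘I : ℤIrr(B) → ℤIrr(B'') is a perfect isometry; moreover μ_{J∘I}(g,k) = (1/|H|) Σ_{h∈H} μ_I(g,h⁻¹) μ_J(h,k) for all g ∈ G, k ∈ K. Hence being perfectly isometric is an equivalence relation on p-blocks. -/
open scoped BigOperators
open Finset

noncomputable section

/-- `χ : G → ℂ` is an irreducible complex character of the finite group `G`. -/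
def IsIrrChar (G : Type) [Group G] [Fintype G] (χ : G → ℂ) : Prop :=
  ∃ V : FDRep ℂ G, CategoryTheory.Simple V ∧ χ = V.character

/-- An element is `p`-regular if `p` does not divide its order. -/
def pRegular (p : ℕ) {G : Type} [Monoid G] (g : G) : Prop :=
  ¬ p ∣ orderOf g

/-- The `p`-part of a natural number. -/
def pPart (p n : ℕ) : ℕ := p ^ (n.factorization p)

/-- The `p`-part of the order of the centralizer of `g`. -/
def centOrderP (p : ℕ) {G : Type} [Group G] (g : G) : ℕ :=
  pPart p (Nat.card (Subgroup.centralizer ({g} : Set G)))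

/-- The usual inner product of class functions on a finite group. -/
def innerChar (G : Type) [Group G] [Fintype G] (χ ψ : G → ℂ) : ℂ :=
  (Fintype.card G : ℂ)⁻¹ * ∑ g : G, χ g * ψ g⁻¹

/-- The group `ℤIrr(B)` of generalized characters of a block `B`, realized as the
`ℤ`-span of the characters in `B` inside the functions `G → ℂ`. -/
def ZIrr {G : Type} [Group G] [Fintype G] (B : Finset (G → ℂ)) : Submodule ℤ (G → ℂ) :=
  Submodule.span ℤ (B : Set (G → ℂ))

/-- A character `χ ∈ B` viewed as an element of `ℤIrr(B)`. -/
def elt {G : Type} [Group G] [Fintype G] {B : Finset (G → ℂ)} (χ : G → ℂ) (h : χ ∈ B) :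
    ZIrr B :=
  ⟨χ, Submodule.subset_span (Finset.mem_coe.mpr h)⟩

/-- Broué's function `μ_I(g,h) = ∑_{χ ∈ Irr(B)} χ(g)·I(χ)(h)`. -/
def muI {G H : Type} [Group G] [Fintype G] [Group H] [Fintype H]
    {B : Finset (G → ℂ)} {B' : Finset (H → ℂ)}
    (I : ZIrr B →ₗ[ℤ] ZIrr B') (g : G) (h : H) : ℂ :=
  ∑ χ ∈ B.attach, χ.1 g * ((I (elt χ.1 χ.2) : ZIrr B') : H → ℂ) h

/-- Broué's notion of a perfect isometry: an inner-product preserving `ℤ`-linear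
bijection `ℤIrr(B) → ℤIrr(B')` satisfying the separation condition (sep) and the
integrality condition (int). -/
def IsPerfIso (p : ℕ) {G H : Type} [Group G] [Fintype G] [Group H] [Fintype H]
    (B : Finset (G → ℂ)) (B' : Finset (H → ℂ)) (I : ZIrr B ≃ₗ[ℤ] ZIrr B') : Prop :=
  (∀ x y : ZIrr B,
      innerChar H (I x : H → ℂ) (I y : H → ℂ) = innerChar G (x : G → ℂ) (y : G → ℂ)) ∧
  (∀ (g : G) (h : H), Xor' (pRegular p g) (pRegular p h) → muI I.toLinearMap g h = 0) ∧
  (∀ (g : G) (h : H), IsIntegral ℤ (muI I.toLinearMap g h / (centOrderP p g : ℂ)) ∧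
      IsIntegral ℤ (muI I.toLinearMap g h / (centOrderP p h : ℂ)))

/-- By Osima's theorem, `B` is a union of `p`-blocks iff it consists of irreducible
characters and satisfies block orthogonality between `p`-regular and `p`-singular
columns. -/
def IsBlockUnion (p : ℕ) (G : Type) [Group G] [Fintype G] (B : Finset (G → ℂ)) : Prop :=
  (∀ χ ∈ B, IsIrrChar G χ) ∧
  ∀ g h : G, pRegular p g → ¬ pRegular p h → ∑ χ ∈ B, χ g * χ h = 0

/-- A `p`-block of `G`: a minimal nonempty union of blocks. -/
def IsBlock (p : ℕ) (G : Type) [Group G] [Fintype G] (B : Finset (G → ℂ)) : Prop :=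
  IsBlockUnion p G B ∧ B.Nonempty ∧
    ∀ C ⊆ B, IsBlockUnion p G C → C = ∅ ∨ C = B

/-!
Expanding `J (I χ)` in the orthonormal basis `Irr(B')` of `ℤIrr(B')` turns `μ_{J∘I}(g,k)` into the
convolution `|H|⁻¹ ∑_h μ_I(g,h⁻¹) μ_J(h,k)`, and separation for `J∘I` holds term by term.
For integrality, group the convolution by conjugacy classes of `H`: the class of `h` contributes
`μ_I(g,h⁻¹) μ_J(h,k) / |C_H(h)|`, and `|C_H(h)|_{p'}` divides `|H|_{p'}`, so the integrality
conditions for `I` and `J` at `h` make `|H|_{p'} · μ_{J∘I}(g,k) / |C_G(g)|_p` an algebraic integer.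
So is `|C_G(g)|_p` times it, namely `μ_{J∘I}(g,k)`, because character values are. These two
multipliers are coprime, hence `μ_{J∘I}(g,k) / |C_G(g)|_p` is integral; likewise for `|C_K(k)|_p`.
-/

universe u

open Polynomial in
theorem Module.End.isIntegral_trace_of_pow_eq_one {K V : Type*} [Field K] [IsAlgClosed K]
    [AddCommGroup V] [Module K V] [FiniteDimensional K V] (f : Module.End K V) {m : ℕ}
    (hm : m ≠ 0) (hf : f ^ m = 1) : IsIntegral ℤ (LinearMap.trace K V f) := by
  rw [trace_eq_sum_roots_charpoly_of_splits (IsAlgClosed.splits _)]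
  refine IsIntegral.multiset_sum fun t ht => ?_
  obtain ⟨v, hv⟩ := ((f.hasEigenvalue_iff_isRoot_charpoly t).2
    (isRoot_of_mem_roots ht)).exists_hasEigenvector
  have hv_pow := hv.pow_apply m
  rw [hf, Module.End.one_apply] at hv_pow
  have hv_zero : (t ^ m - 1) • v = 0 := by rw [sub_smul, ← hv_pow, one_smul, sub_self]
  have ht_pow : t ^ m = 1 := sub_eq_zero.1 ((smul_eq_zero.1 hv_zero).resolve_right hv.2)
  exact ⟨X ^ m - C 1, monic_X_pow_sub_C 1 hm, by simp [ht_pow]⟩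

theorem FDRep.isIntegral_character {k G : Type u} [Field k] [IsAlgClosed k] [Group G] [Finite G]
    (V : FDRep k G) (g : G) : IsIntegral ℤ (V.character g) :=
  Module.End.isIntegral_trace_of_pow_eq_one (V.ρ g) (orderOf_pos g).ne'
    (by rw [← map_pow, pow_orderOf_eq_one, map_one])

theorem Nat.coprime_ordProj_ordCompl (p m : ℕ) {n : ℕ} (hn : n ≠ 0) :
    Nat.Coprime (ordProj[p] m) (ordCompl[p] n) := by
  by_cases hp : p.Prime
  · exact (Nat.coprime_ordCompl hp hn).pow_left _
  · simp [Nat.factorization_eq_zero_of_not_prime m hp]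

theorem isIntegral_of_coprime_of_natCast_mul {A : Type*} [CommRing A] {x : A} {a b : ℕ}
    (hab : Nat.Coprime a b) (ha : IsIntegral ℤ ((a : A) * x)) (hb : IsIntegral ℤ ((b : A) * x)) :
    IsIntegral ℤ x := by
  have hbezout : (a : A) * Nat.gcdA a b + b * Nat.gcdB a b = 1 := by
    have := congrArg (Int.cast : ℤ → A) ((Nat.gcd_eq_gcd_ab a b).symm.trans (congrArg _ hab))
    push_cast at this
    exact this
  have hx : x = (Nat.gcdA a b : A) * ((a : A) * x) + (Nat.gcdB a b : A) * ((b : A) * x) := by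
    linear_combination -x * hbezout
  rw [hx]
  exact ((isIntegral_intCast _).mul ha).add ((isIntegral_intCast _).mul hb)

section Group

variable {H : Type} [Group H]

theorem pRegular_inv (p : ℕ) (h : H) : pRegular p h⁻¹ ↔ pRegular p h := by
  rw [pRegular, pRegular, orderOf_inv]

theorem Subgroup.centralizer_singleton_inv (h : H) :
    Subgroup.centralizer {h⁻¹} = Subgroup.centralizer {h} := by
  ext x
  simp only [Subgroup.mem_centralizer_singleton_iff]
  exact Commute.inv_right_iff

theorem centOrderP_inv (p : ℕ) (h : H) : centOrderP p h⁻¹ = centOrderP p h := by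
  rw [centOrderP, centOrderP, Subgroup.centralizer_singleton_inv]

theorem nat_card_conjClass_mul_nat_card_centralizer [Finite H] (h : H) :
    Nat.card (ConjClasses.mk h).carrier * Nat.card (Subgroup.centralizer {h}) = Nat.card H := by
  rw [← ConjAct.orbit_eq_carrier_conjClasses, Nat.card_coe_set_eq,
    ← MulAction.index_stabilizer, Subgroup.nat_card_centralizer_nat_card_stabilizer,
    Subgroup.index_mul_card, Nat.card_congr ConjAct.ofConjAct.toEquiv]

variable [Fintype H]

open scoped Classical in
theorem inv_card_mul_sum_eq_sum_conjClasses {R : Type*} [Field R] [CharZero R] (F : H → R)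
    (hF : ∀ u h : H, F (u * h * u⁻¹) = F h) :
    (Fintype.card H : R)⁻¹ * ∑ h, F h =
      ∑ c : ConjClasses H, F c.out / Nat.card (Subgroup.centralizer {c.out}) := by
  have hmk_out (c : ConjClasses H) : ConjClasses.mk c.out = c := Quotient.out_eq c
  have hfiber (c : ConjClasses H) :
      ∑ h with ConjClasses.mk h = c, F h = Nat.card c.carrier * F c.out := by
    rw [Finset.sum_congr rfl (g := fun _ => F c.out), Finset.sum_const, nsmul_eq_mul]
    · congr
      rw [Nat.card_eq_card_toFinset]
      congr
      ext
      simp [ConjClasses.mem_carrier_iff_mk_eq]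
    · intro h hh
      have hconj : IsConj h c.out := by
        rw [← ConjClasses.mk_eq_mk_iff_isConj, hmk_out]
        exact (Finset.mem_filter.1 hh).2
      obtain ⟨u, hu⟩ := isConj_iff.1 hconj
      rw [← hu, hF]
  rw [← Finset.sum_fiberwise Finset.univ ConjClasses.mk F, Finset.mul_sum]
  refine Finset.sum_congr rfl fun c _ => ?_
  have hcard := nat_card_conjClass_mul_nat_card_centralizer c.out
  rw [hmk_out, Nat.card_eq_fintype_card (α := H)] at hcard
  obtain ⟨hclass, hcent⟩ := mul_ne_zero_iff.1 (hcard ▸ Fintype.card_ne_zero)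
  rw [hfiber, ← hcard, Nat.cast_mul]
  field_simp

theorem isIntegral_inv_card_mul_sum_div_pPart (p n : ℕ) (F : H → ℂ)
    (hF : ∀ u h : H, F (u * h * u⁻¹) = F h)
    (hint : IsIntegral ℤ ((Fintype.card H : ℂ)⁻¹ * ∑ h, F h))
    (hloc : ∀ h, IsIntegral ℤ (F h / ((pPart p n : ℂ) * centOrderP p h))) :
    IsIntegral ℤ ((Fintype.card H : ℂ)⁻¹ * (∑ h, F h) / pPart p n) := by
  classical
  have hn : (pPart p n : ℂ) ≠ 0 := Nat.cast_ne_zero.2 (Nat.ordProj_pos n p).ne'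
  have hcop : Nat.Coprime (pPart p n) (ordCompl[p] (Fintype.card H)) :=
    Nat.coprime_ordProj_ordCompl p n Fintype.card_ne_zero
  refine isIntegral_of_coprime_of_natCast_mul hcop (by rwa [mul_div_cancel₀ _ hn]) ?_
  rw [inv_card_mul_sum_eq_sum_conjClasses F hF, Finset.sum_div, Finset.mul_sum]
  refine IsIntegral.sum _ fun c _ => ?_
  set C := Nat.card (Subgroup.centralizer {c.out})
  obtain ⟨d, hd⟩ : ordCompl[p] C ∣ ordCompl[p] (Fintype.card H) := by
    refine Nat.ordCompl_dvd_ordCompl_of_dvd ?_ p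
    rw [← Nat.card_eq_fintype_card]
    exact Subgroup.card_subgroup_dvd_card _
  have hC : (C : ℂ) = centOrderP p c.out * (ordCompl[p] C : ℕ) := by
    exact_mod_cast (Nat.ordProj_mul_ordCompl_eq_self C p).symm
  have hH : ((ordCompl[p] (Fintype.card H) : ℕ) : ℂ) = (ordCompl[p] C : ℕ) * d := by
    exact_mod_cast hd
  have hcompl : ((ordCompl[p] C : ℕ) : ℂ) ≠ 0 :=
    Nat.cast_ne_zero.2 (Nat.ordCompl_pos p (Nat.card_pos : 0 < C).ne').ne'
  have hcent : (centOrderP p c.out : ℂ) ≠ 0 := Nat.cast_ne_zero.2 (Nat.ordProj_pos C p).ne'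
  convert (isIntegral_natCast (R := ℤ) d).mul (hloc c.out) using 1
  rw [hH, hC]
  field_simp

end Group

section ZIrr

variable {G : Type} [Group G] [Fintype G] {B : Finset (G → ℂ)}

theorem innerChar_add_right (χ f f' : G → ℂ) :
    innerChar G χ (f + f') = innerChar G χ f + innerChar G χ f' := by
  simp only [innerChar, Pi.add_apply, mul_add, Finset.sum_add_distrib]

theorem innerChar_zsmul_right (χ : G → ℂ) (n : ℤ) (f : G → ℂ) :
    innerChar G χ (n • f) = n • innerChar G χ f := by
  simp only [innerChar, Pi.smul_apply, zsmul_eq_mul, Finset.mul_sum]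
  exact Finset.sum_congr rfl fun g _ => by ring

open scoped Classical in
theorem innerChar_eq_ite (hB : ∀ χ ∈ B, IsIrrChar G χ) {χ ψ : G → ℂ} (hχ : χ ∈ B)
    (hψ : ψ ∈ B) : innerChar G χ ψ = if χ = ψ then 1 else 0 := by
  obtain ⟨V, _, rfl⟩ := hB χ hχ
  obtain ⟨W, _, rfl⟩ := hB ψ hψ
  have h := FDRep.char_orthonormal V W
  rw [Nat.card_eq_fintype_card] at h
  rw [innerChar, h]
  refine if_congr ⟨fun ⟨i⟩ => FDRep.char_iso i, fun hVW => ?_⟩ rfl rfl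
  by_contra hne
  have hVV := FDRep.char_orthonormal V V
  rw [if_pos ⟨CategoryTheory.Iso.refl V⟩, Nat.card_eq_fintype_card] at hVV
  rw [← hVW, hVV, if_neg hne] at h
  exact one_ne_zero h

theorem ZIrr.isIntegral_apply (hB : ∀ χ ∈ B, IsIrrChar G χ) {f : G → ℂ} (hf : f ∈ ZIrr B)
    (g : G) : IsIntegral ℤ (f g) := by
  induction hf using Submodule.span_induction with
  | mem χ hχ =>
    obtain ⟨V, -, rfl⟩ := hB χ hχ
    exact V.isIntegral_character g
  | zero => exact isIntegral_zero
  | add _ _ _ _ hf hf' => exact hf.add hf'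
  | smul n _ _ hf => exact hf.zsmul n

theorem ZIrr.apply_conj (hB : ∀ χ ∈ B, IsIrrChar G χ) {f : G → ℂ} (hf : f ∈ ZIrr B)
    (u g : G) : f (u * g * u⁻¹) = f g := by
  induction hf using Submodule.span_induction with
  | mem χ hχ =>
    obtain ⟨V, -, rfl⟩ := hB χ hχ
    exact V.char_conj g u
  | zero => rfl
  | add _ _ _ _ hf hf' => simp only [Pi.add_apply, hf, hf']
  | smul n _ _ hf => simp only [Pi.smul_apply, hf]

theorem ZIrr.map_eq_sum_innerChar_smul (hB : ∀ χ ∈ B, IsIrrChar G χ) {M : Type*}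
    [AddCommGroup M] [Module ℂ M] (φ : ZIrr B →ₗ[ℤ] M) (x : ZIrr B) :
    φ x = ∑ χ ∈ B.attach, innerChar G χ.1 x • φ (elt χ.1 χ.2) := by
  obtain ⟨f, hf⟩ := x
  induction hf using Submodule.span_induction with
  | mem ψ hψ =>
    classical
    rw [Finset.sum_eq_single ⟨ψ, hψ⟩]
    · rw [innerChar_eq_ite hB hψ hψ, if_pos rfl, one_smul]
      rfl
    · intro χ _ hχψ
      rw [innerChar_eq_ite hB χ.2 hψ, if_neg fun h => hχψ (Subtype.ext h), zero_smul]
    · exact fun h => absurd (Finset.mem_attach _ _) h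
  | zero =>
    simp only [innerChar, Pi.zero_apply, mul_zero, Finset.sum_const_zero, zero_smul]
    exact map_zero φ
  | add f f' hf hf' ihf ihf' =>
    calc φ ⟨f + f', _⟩ = φ ⟨f, hf⟩ + φ ⟨f', hf'⟩ := map_add φ ⟨f, hf⟩ ⟨f', hf'⟩
      _ = _ := by
        rw [ihf, ihf', ← Finset.sum_add_distrib]
        simp only [innerChar_add_right, add_smul]
  | smul n f hf ihf =>
    calc φ ⟨n • f, _⟩ = n • φ ⟨f, hf⟩ := map_zsmul φ n ⟨f, hf⟩
      _ = _ := by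
        rw [ihf, Finset.smul_sum]
        simp only [innerChar_zsmul_right, smul_assoc]

end ZIrr

section muI

variable {G H K : Type} [Group G] [Fintype G] [Group H] [Fintype H] [Group K] [Fintype K]
  {B : Finset (G → ℂ)} {B' : Finset (H → ℂ)} {B'' : Finset (K → ℂ)}

theorem muI_comp (hB' : ∀ ψ ∈ B', IsIrrChar H ψ) (I : ZIrr B →ₗ[ℤ] ZIrr B')
    (L : ZIrr B' →ₗ[ℤ] ZIrr B'') (g : G) (k : K) :
    muI (L ∘ₗ I) g k = (Fintype.card H : ℂ)⁻¹ * ∑ h : H, muI I g h⁻¹ * muI L h k := by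
  have hexp (x : ZIrr B') : (L x : K → ℂ) k =
      ∑ ψ ∈ B'.attach, innerChar H ψ.1 x * (L (elt ψ.1 ψ.2) : K → ℂ) k := by
    simpa using congrFun (ZIrr.map_eq_sum_innerChar_smul hB' ((ZIrr B'').subtype ∘ₗ L) x) k
  simp only [muI, LinearMap.comp_apply]
  rw [Finset.sum_congr rfl fun χ _ => by rw [hexp]]
  simp only [innerChar, Finset.mul_sum, Finset.sum_mul]
  refine Finset.sum_comm.trans (Eq.trans ?_ Finset.sum_comm)
  refine Finset.sum_congr rfl fun ψ _ => Finset.sum_comm.trans ?_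
  exact Finset.sum_congr rfl fun h _ => Finset.sum_congr rfl fun χ _ => by ring

theorem muI_conj_left (hB : ∀ χ ∈ B, IsIrrChar G χ) (I : ZIrr B →ₗ[ℤ] ZIrr B') (u g : G)
    (h : H) : muI I (u * g * u⁻¹) h = muI I g h :=
  Finset.sum_congr rfl fun χ _ => by rw [ZIrr.apply_conj hB (Submodule.subset_span χ.2)]

theorem muI_conj_right (hB' : ∀ ψ ∈ B', IsIrrChar H ψ) (I : ZIrr B →ₗ[ℤ] ZIrr B') (g : G)
    (u h : H) : muI I g (u * h * u⁻¹) = muI I g h :=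
  Finset.sum_congr rfl fun χ _ => by rw [ZIrr.apply_conj hB' (I (elt χ.1 χ.2)).2]

theorem muI_inv_mul_muI_conj (hB' : ∀ ψ ∈ B', IsIrrChar H ψ) (I : ZIrr B →ₗ[ℤ] ZIrr B')
    (L : ZIrr B' →ₗ[ℤ] ZIrr B'') (g : G) (k : K) (u h : H) :
    muI I g (u * h * u⁻¹)⁻¹ * muI L (u * h * u⁻¹) k = muI I g h⁻¹ * muI L h k := by
  rw [show (u * h * u⁻¹)⁻¹ = u * h⁻¹ * u⁻¹ by group, muI_conj_right hB', muI_conj_left hB']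

theorem isIntegral_muI (hB : ∀ χ ∈ B, IsIrrChar G χ) (hB' : ∀ ψ ∈ B', IsIrrChar H ψ)
    (I : ZIrr B →ₗ[ℤ] ZIrr B') (g : G) (h : H) : IsIntegral ℤ (muI I g h) :=
  IsIntegral.sum _ fun χ _ => (ZIrr.isIntegral_apply hB (Submodule.subset_span χ.2) g).mul
    (ZIrr.isIntegral_apply hB' (I (elt χ.1 χ.2)).2 h)

theorem muI_inv_mul_muI_eq_zero {p : ℕ} {I : ZIrr B →ₗ[ℤ] ZIrr B'} {L : ZIrr B' →ₗ[ℤ] ZIrr B''}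
    (hI : ∀ (g : G) (h : H), Xor (pRegular p g) (pRegular p h) → muI I g h = 0)
    (hL : ∀ (h : H) (k : K), Xor (pRegular p h) (pRegular p k) → muI L h k = 0)
    {g : G} {k : K} (hgk : Xor (pRegular p g) (pRegular p k)) (h : H) :
    muI I g h⁻¹ * muI L h k = 0 := by
  have hsplit : Xor (pRegular p g) (pRegular p h⁻¹) ∨ Xor (pRegular p h) (pRegular p k) := by
    rw [pRegular_inv]
    unfold Xor at *
    tauto
  rcases hsplit with hgh | hhk
  · rw [hI g h⁻¹ hgh, zero_mul]
  · rw [hL h k hhk, mul_zero]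

end muI

theorem composition_perfect_isometry_general (p : ℕ)
    (G H K : Type) [Group G] [Fintype G] [Group H] [Fintype H] [Group K] [Fintype K]
    (B : Finset (G → ℂ)) (B' : Finset (H → ℂ)) (B'' : Finset (K → ℂ))
    (hB : IsBlock p G B) (hB' : IsBlock p H B') (hB'' : IsBlock p K B'')
    (I : ZIrr B ≃ₗ[ℤ] ZIrr B') (J : ZIrr B' ≃ₗ[ℤ] ZIrr B'')
    (hI : IsPerfIso p B B' I) (hJ : IsPerfIso p B' B'' J) :
    IsPerfIso p B B'' (I.trans J) ∧
    ∀ (g : G) (k : K), muI (I.trans J).toLinearMap g k =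
      (Fintype.card H : ℂ)⁻¹ * ∑ h : H, muI I.toLinearMap g h⁻¹ * muI J.toLinearMap h k := by
  have hconv (g : G) (k : K) : muI (I.trans J).toLinearMap g k = _ :=
    muI_comp hB'.1.1 I.toLinearMap J.toLinearMap g k
  have hclass (g : G) (k : K) := muI_inv_mul_muI_conj hB'.1.1 I.toLinearMap J.toLinearMap g k
  refine ⟨⟨fun x y => (hJ.1 (I x) (I y)).trans (hI.1 x y), fun g k hgk => ?_, fun g k => ?_⟩,
    hconv⟩
  · rw [hconv]
    exact mul_eq_zero_of_right _
      (Finset.sum_eq_zero fun h _ => muI_inv_mul_muI_eq_zero hI.2.1 hJ.2.1 hgk h)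
  have hint := isIntegral_muI hB.1.1 hB''.1.1 (I.trans J).toLinearMap g k
  rw [hconv] at hint ⊢
  refine ⟨isIntegral_inv_card_mul_sum_div_pPart p _ _ (hclass g k) hint fun h => ?_,
    isIntegral_inv_card_mul_sum_div_pPart p _ _ (hclass g k) hint fun h => ?_⟩
  · rw [mul_div_mul_comm]
    exact (hI.2.2 g h⁻¹).1.mul (hJ.2.2 h k).1
  · rw [mul_comm (pPart p _ : ℂ), mul_div_mul_comm, ← centOrderP_inv]
    exact (hI.2.2 g h⁻¹).2.mul (hJ.2.2 h k).2

/-- Perfectly isometric is a transitive relation: the composition of perfect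
isometries is a perfect isometry, and
`μ_{J∘I}(g,k) = (1/|H|) ∑_{h∈H} μ_I(g,h⁻¹) μ_J(h,k)`.  Together with reflexivity and
symmetry, being perfectly isometric is an equivalence relation on `p`-blocks. -/
theorem composition_perfect_isometry (p : ℕ) [Fact p.Prime]
    (G H K : Type) [Group G] [Fintype G] [Group H] [Fintype H] [Group K] [Fintype K]
    (B : Finset (G → ℂ)) (B' : Finset (H → ℂ)) (B'' : Finset (K → ℂ))
    (hB : IsBlock p G B) (hB' : IsBlock p H B') (hB'' : IsBlock p K B'')
    (I : ZIrr B ≃ₗ[ℤ] ZIrr B') (J : ZIrr B' ≃ₗ[ℤ] ZIrr B'')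
    (hI : IsPerfIso p B B' I) (hJ : IsPerfIso p B' B'' J) :
    IsPerfIso p B B'' (I.trans J) ∧
    ∀ (g : G) (k : K), muI (I.trans J).toLinearMap g k =
      (Fintype.card H : ℂ)⁻¹ * ∑ h : H, muI I.toLinearMap g h⁻¹ * muI J.toLinearMap h k :=
  composition_perfect_isometry_general p G H K B B' B'' hB hB' hB'' I J hI hJ

end
end

section
/- Let B and B' be nilpotent p-blocks with defect groups P and Q respectively, and suppose B and B' are perfectly isometric. Then every perfect isometry I : ℤIrr(B) → ℤIrr(B') has a uniform sign: either I(Irr(B)) = Irr(B') or I(Irr(B)) = −Irr(B'). Concretely, for G = P and H = Q (principal blocks of p-groups), one computes Σ_{χ∈Irr(P)} ±χ(1)² = μ_I(1,1) = Σ_{h∈Q} μ_I(1,h) = ±|P|, forcing all signs equal. -/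
/-! By separation, `μ_I(1, ·) = I(∑_χ χ(1) χ)` vanishes off `1`, since every nontrivial element of
the `p`-group `Q` is `p`-singular. Pairing it with `I(χ) = ±ψ` and using that `I` is an isometry
gives `χ(1) · |Q| = μ_I(1, 1) · (±ψ(1))`. As `χ(1)`, `ψ(1)` and `|Q|` are positive integers, the
sign in front of `ψ` is the sign of `Re μ_I(1, 1)`, the same for every `χ`. -/

open scoped BigOperators
open Finset

noncomputable section

open CategoryTheory

section InnerChar

variable {G : Type} [Group G] [Fintype G]

lemma innerChar_comm (χ ψ : G → ℂ) : innerChar G χ ψ = innerChar G ψ χ := by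
  rw [innerChar, innerChar]
  congr 1
  exact Fintype.sum_equiv (Equiv.inv G) _ _ fun g => by simp [mul_comm]

lemma innerChar_sum_smul_left {ι : Type*} (s : Finset ι) (c : ι → ℂ) (f : ι → G → ℂ)
    (ψ : G → ℂ) :
    innerChar G (∑ i ∈ s, c i • f i) ψ = ∑ i ∈ s, c i * innerChar G (f i) ψ := by
  simp only [innerChar, Finset.sum_apply, Pi.smul_apply, smul_eq_mul, Finset.sum_mul,
    Finset.mul_sum]
  rw [Finset.sum_comm]
  exact Finset.sum_congr rfl fun _ _ => Finset.sum_congr rfl fun _ _ => by ring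

lemma innerChar_eq_of_eq_zero_of_ne_one {f : G → ℂ} (hf : ∀ g, g ≠ 1 → f g = 0)
    (ψ : G → ℂ) : innerChar G f ψ = (Fintype.card G : ℂ)⁻¹ * (f 1 * ψ 1) := by
  rw [innerChar, Finset.sum_eq_single 1 (fun g _ hg => by rw [hf g hg, zero_mul])
    (fun h => absurd (Finset.mem_univ 1) h), inv_one]

end InnerChar

namespace IsIrrChar

variable {G : Type} [Group G] [Fintype G] {χ ψ : G → ℂ}

lemma innerChar_self (hχ : IsIrrChar G χ) : innerChar G χ χ = 1 := by
  obtain ⟨V, hV, rfl⟩ := hχ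
  have hVV : Nonempty (V ≅ V) := ⟨Iso.refl V⟩
  simpa [innerChar, Nat.card_eq_fintype_card, hVV] using FDRep.char_orthonormal V V

lemma innerChar_eq_zero (hχ : IsIrrChar G χ) (hψ : IsIrrChar G ψ) (hne : χ ≠ ψ) :
    innerChar G χ ψ = 0 := by
  obtain ⟨V, hV, rfl⟩ := hχ
  obtain ⟨W, hW, rfl⟩ := hψ
  have hVW : ¬ Nonempty (V ≅ W) := fun ⟨e⟩ => hne (FDRep.char_iso e)
  simpa [innerChar, Nat.card_eq_fintype_card, hVW] using FDRep.char_orthonormal V W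

lemma exists_pos_apply_one_eq (hχ : IsIrrChar G χ) : ∃ d : ℕ, 0 < d ∧ χ 1 = d := by
  obtain ⟨V, hV, rfl⟩ := hχ
  refine ⟨Module.finrank ℂ V, Nat.pos_of_ne_zero fun h0 => ?_, FDRep.char_one V⟩
  -- a zero-dimensional representation has character `0`, which has norm `0 ≠ 1`
  have : Subsingleton V := Module.finrank_zero_iff.mp h0
  have hzero : V.character = 0 := funext fun g => by
    change LinearMap.trace ℂ V (V.ρ g) = 0
    rw [Subsingleton.elim (V.ρ g) 0, map_zero]
  have hnorm := innerChar_self ⟨V, hV, rfl⟩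
  simp [hzero, innerChar] at hnorm

end IsIrrChar

lemma sum_mul_innerChar_eq_of_isIrrChar {G : Type} [Group G] [Fintype G]
    {B : Finset (G → ℂ)} (hB : ∀ χ ∈ B, IsIrrChar G χ) (c : (G → ℂ) → ℂ)
    {ψ : G → ℂ} (hψ : ψ ∈ B) :
    ∑ χ ∈ B, c χ * innerChar G χ ψ = c ψ := by
  rw [Finset.sum_eq_single ψ (fun χ hχ hne => by
      rw [(hB χ hχ).innerChar_eq_zero (hB ψ hψ) hne, mul_zero])
    (fun h => absurd hψ h), (hB ψ hψ).innerChar_self, mul_one]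

lemma Int.exists_eq_one_or_eq_neg_one_of_sum_sq_eq_one {ι : Type*} {s : Finset ι}
    {c : ι → ℤ} (h : ∑ i ∈ s, c i ^ 2 = 1) :
    ∃ j ∈ s, (c j = 1 ∨ c j = -1) ∧ ∀ i ∈ s, i ≠ j → c i = 0 := by
  classical
  obtain ⟨j, hj, hcj⟩ : ∃ j ∈ s, c j ≠ 0 := by
    by_contra! hall
    rw [Finset.sum_eq_zero fun i hi => by rw [hall i hi, zero_pow two_ne_zero]] at h
    exact zero_ne_one h
  have hsq : c j ^ 2 = 1 :=
    Int.sq_eq_one_of_sq_le_three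
      (h ▸ Finset.single_le_sum (fun i _ => sq_nonneg (c i)) hj |>.trans (by norm_num)) hcj
  have hrest : ∑ i ∈ s.erase j, c i ^ 2 = 0 := by
    linarith [Finset.add_sum_erase s (fun i => c i ^ 2) hj]
  refine ⟨j, hj, sq_eq_one_iff.mp hsq, fun i hi hij => ?_⟩
  exact pow_eq_zero_iff two_ne_zero |>.mp <|
    (Finset.sum_eq_zero_iff_of_nonneg fun i _ => sq_nonneg (c i)).mp hrest i
      (Finset.mem_erase.mpr ⟨hij, hi⟩)

lemma exists_eq_or_eq_neg_of_innerChar_self_eq_one {G : Type} [Group G] [Fintype G]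
    {B : Finset (G → ℂ)} (hB : ∀ χ ∈ B, IsIrrChar G χ) {x : G → ℂ} (hx : x ∈ ZIrr B)
    (hnorm : innerChar G x x = 1) : ∃ ψ ∈ B, x = ψ ∨ x = -ψ := by
  obtain ⟨c, -, rfl⟩ := Submodule.mem_span_finset.mp hx
  have hcoe : ∑ χ ∈ B, c χ • χ = ∑ χ ∈ B, (c χ : ℂ) • χ := by
    simp only [Int.cast_smul_eq_zsmul]
  have hcoef : ∀ ψ ∈ B, innerChar G (∑ χ ∈ B, c χ • χ) ψ = c ψ := fun ψ hψ => by
    rw [hcoe, innerChar_sum_smul_left, sum_mul_innerChar_eq_of_isIrrChar hB _ hψ]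
  have hsum : ∑ χ ∈ B, c χ ^ 2 = 1 := by
    have : innerChar G (∑ χ ∈ B, c χ • χ) (∑ χ ∈ B, c χ • χ) =
        ∑ χ ∈ B, ((c χ ^ 2 : ℤ) : ℂ) := by
      rw [hcoe, innerChar_sum_smul_left, ← hcoe]
      refine Finset.sum_congr rfl fun χ hχ => ?_
      rw [innerChar_comm, hcoef χ hχ]
      push_cast
      ring
    exact_mod_cast this.symm.trans hnorm
  obtain ⟨ψ, hψ, hsign, hzero⟩ := Int.exists_eq_one_or_eq_neg_one_of_sum_sq_eq_one hsum
  have hsingle : ∑ χ ∈ B, c χ • χ = c ψ • ψ :=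
    Finset.sum_eq_single ψ (fun χ hχ hne => by rw [hzero χ hχ hne, zero_smul])
      (fun h => absurd hψ h)
  refine ⟨ψ, hψ, ?_⟩
  rcases hsign with h | h
  · exact Or.inl (by rw [hsingle, h, one_smul])
  · exact Or.inr (by rw [hsingle, h, neg_smul, one_smul])

lemma pRegular_one {M : Type} [Monoid M] {p : ℕ} (hp : p ≠ 1) : pRegular p (1 : M) := by
  simpa [pRegular] using hp

lemma IsPGroup.not_pRegular {p : ℕ} [Fact p.Prime] {G : Type} [Group G] (hG : IsPGroup p G)
    {g : G} (hg : g ≠ 1) : ¬ pRegular p g := by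
  obtain ⟨k, hk⟩ := IsPGroup.iff_orderOf.mp hG g
  have hk0 : k ≠ 0 := by
    rintro rfl
    exact hg (orderOf_eq_one_iff.mp (by simpa using hk))
  exact fun h => h (hk ▸ dvd_pow_self p hk0)

section MuI

variable {G H : Type} [Group G] [Fintype G] [Group H] [Fintype H]
  {B : Finset (G → ℂ)} {B' : Finset (H → ℂ)}

lemma muI_one_eq_zero_of_isPGroup {p : ℕ} [Fact p.Prime] (hH : IsPGroup p H)
    {I : ZIrr B →ₗ[ℤ] ZIrr B'}
    (hsep : ∀ (g : G) (h : H), Xor' (pRegular p g) (pRegular p h) → muI I g h = 0)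
    {h : H} (hh : h ≠ 1) : muI I 1 h = 0 :=
  hsep 1 h (Or.inl ⟨pRegular_one (Fact.out : p.Prime).ne_one, hH.not_pRegular hh⟩)

lemma innerChar_muI_apply (hB : ∀ χ ∈ B, IsIrrChar G χ) {I : ZIrr B →ₗ[ℤ] ZIrr B'}
    (hI : ∀ x y, innerChar H (I x : H → ℂ) (I y : H → ℂ) = innerChar G (x : G → ℂ) y)
    (g : G) {χ : G → ℂ} (hχ : χ ∈ B) :
    innerChar H (muI I g) (I (elt χ hχ) : H → ℂ) = χ g := by
  have hmu : muI I g = ∑ χ' ∈ B.attach, χ'.1 g • (I (elt χ'.1 χ'.2) : H → ℂ) := by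
    ext h
    simp [muI, Finset.sum_apply]
  rw [hmu, innerChar_sum_smul_left]
  simp only [hI]
  exact (Finset.sum_attach B fun χ' => χ' g * innerChar G χ' χ).trans
    (sum_mul_innerChar_eq_of_isIrrChar hB (fun χ' => χ' g) hχ)

lemma apply_one_mul_card_eq_muI_mul (hB : ∀ χ ∈ B, IsIrrChar G χ)
    {I : ZIrr B →ₗ[ℤ] ZIrr B'}
    (hI : ∀ x y, innerChar H (I x : H → ℂ) (I y : H → ℂ) = innerChar G (x : G → ℂ) y)
    (hvan : ∀ h : H, h ≠ 1 → muI I 1 h = 0) {χ : G → ℂ} (hχ : χ ∈ B) :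
    χ 1 * Fintype.card H = muI I 1 1 * (I (elt χ hχ) : H → ℂ) 1 := by
  have h := innerChar_muI_apply hB hI 1 hχ
  rw [innerChar_eq_of_eq_zero_of_ne_one hvan] at h
  have hcard : (Fintype.card H : ℂ) ≠ 0 := Nat.cast_ne_zero.mpr Fintype.card_ne_zero
  rw [← h]
  field_simp

end MuI

lemma IsIrrChar.re_pos_of_apply_one_mul_eq {G H : Type} [Group G] [Fintype G] [Group H]
    [Fintype H] {χ : G → ℂ} {ψ : H → ℂ} (hχ : IsIrrChar G χ) (hψ : IsIrrChar H ψ)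
    {n : ℕ} (hn : 0 < n) {z : ℂ} (h : χ 1 * n = z * ψ 1) : 0 < z.re := by
  obtain ⟨d, hd, hχ1⟩ := hχ.exists_pos_apply_one_eq
  obtain ⟨e, he, hψ1⟩ := hψ.exists_pos_apply_one_eq
  have hre : (d * n : ℝ) = z.re * e := by
    simpa [hχ1, hψ1] using congrArg Complex.re h
  have : (0 : ℝ) < z.re * e := hre ▸ by positivity
  exact pos_of_mul_pos_left this (by positivity)

theorem nilpotent_uniform_sign_general (p : ℕ) [Fact p.Prime]
    (P Q : Type) [Group P] [Fintype P] [Group Q] [Fintype Q]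
    (hQ : IsPGroup p Q)
    (BP : Finset (P → ℂ)) (BQ : Finset (Q → ℂ))
    (hBP : ∀ χ, χ ∈ BP ↔ IsIrrChar P χ) (hBQ : ∀ ψ, ψ ∈ BQ ↔ IsIrrChar Q ψ)
    (I : ZIrr BP ≃ₗ[ℤ] ZIrr BQ) (hI : IsPerfIso p BP BQ I) :
    (∀ χ (hχ : χ ∈ BP), ∃ ψ ∈ BQ, ((I (elt χ hχ) : ZIrr BQ) : Q → ℂ) = ψ) ∨
    (∀ χ (hχ : χ ∈ BP), ∃ ψ ∈ BQ, ((I (elt χ hχ) : ZIrr BQ) : Q → ℂ) = -ψ) := by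
  obtain ⟨hinner, hsep, -⟩ := hI
  have hIrrP : ∀ χ ∈ BP, IsIrrChar P χ := fun χ hχ => (hBP χ).mp hχ
  have hIrrQ : ∀ ψ ∈ BQ, IsIrrChar Q ψ := fun ψ hψ => (hBQ ψ).mp hψ
  set μ := muI I.toLinearMap 1 1
  have hdeg : ∀ χ (hχ : χ ∈ BP), χ 1 * Fintype.card Q = μ * (I (elt χ hχ) : Q → ℂ) 1 :=
    fun χ hχ => apply_one_mul_card_eq_muI_mul hIrrP hinner
      (fun _ hh => muI_one_eq_zero_of_isPGroup hQ hsep hh) hχ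
  have hpm : ∀ χ (hχ : χ ∈ BP), ∃ ψ ∈ BQ,
      (I (elt χ hχ) : Q → ℂ) = ψ ∨ (I (elt χ hχ) : Q → ℂ) = -ψ := fun χ hχ =>
    exists_eq_or_eq_neg_of_innerChar_self_eq_one hIrrQ (I (elt χ hχ)).2
      ((hinner _ _).trans (hIrrP χ hχ).innerChar_self)
  by_cases hμ : 0 < μ.re
  · refine Or.inl fun χ hχ => ?_
    obtain ⟨ψ, hψ, hpos | hneg⟩ := hpm χ hχ
    · exact ⟨ψ, hψ, hpos⟩
    · have := (hIrrP χ hχ).re_pos_of_apply_one_mul_eq (hIrrQ ψ hψ) Fintype.card_pos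
        (z := -μ) (by rw [hdeg χ hχ, hneg]; simp)
      simp only [Complex.neg_re] at this
      linarith
  · refine Or.inr fun χ hχ => ?_
    obtain ⟨ψ, hψ, hpos | hneg⟩ := hpm χ hχ
    · exact absurd ((hIrrP χ hχ).re_pos_of_apply_one_mul_eq (hIrrQ ψ hψ) Fintype.card_pos
        (by rw [hdeg χ hχ, hpos])) hμ
    · exact ⟨ψ, hψ, hneg⟩

/-- Every perfect isometry between nilpotent blocks has a uniform sign.  Concretely,
after reducing (via the Broué–Puig `*`-construction) to the principal blocks of the
defect groups `P` and `Q` themselves: every perfect isometry between the unique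
blocks of the `p`-groups `P` and `Q` maps `Irr(P)` either entirely to `Irr(Q)` or
entirely to `-Irr(Q)`. -/
theorem nilpotent_uniform_sign (p : ℕ) [Fact p.Prime]
    (P Q : Type) [Group P] [Fintype P] [Group Q] [Fintype Q]
    (hP : IsPGroup p P) (hQ : IsPGroup p Q)
    (BP : Finset (P → ℂ)) (BQ : Finset (Q → ℂ))
    (hBP : ∀ χ, χ ∈ BP ↔ IsIrrChar P χ) (hBQ : ∀ ψ, ψ ∈ BQ ↔ IsIrrChar Q ψ)
    (I : ZIrr BP ≃ₗ[ℤ] ZIrr BQ) (hI : IsPerfIso p BP BQ I) :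
    (∀ χ (hχ : χ ∈ BP), ∃ ψ ∈ BQ, ((I (elt χ hχ) : ZIrr BQ) : Q → ℂ) = ψ) ∨
    (∀ χ (hχ : χ ∈ BP), ∃ ψ ∈ BQ, ((I (elt χ hχ) : ZIrr BQ) : Q → ℂ) = -ψ) :=
  nilpotent_uniform_sign_general p P Q hQ BP BQ hBP hBQ I hI
end
end
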